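/- Let (S_n) be the animal walk and τ_{−1} := inf{ n ≥ 1 : S_n < 0 } (which is almost surely finite). Then for every real s with 0 < s < 1, E[s^{τ_{−1}}] = (3 − s − √(3(1−s)(s+3))) / (2s). -/

import Mathlib

open MeasureTheory

/-- The animal walk: S 0 = 0 and S n = ξ 0 + … + ξ (n-1). -/
def walk {Ω : Type*} (ξ : ℕ → Ω → ℤ) (n : ℕ) (ω : Ω) : ℤ :=
  ∑ i ∈ Finset.range n, ξ i ω

/-- The step distribution μ of the animal walk, evaluated on the singleton {z}. -/
noncomputable def animalStepLaw (z : ℤ) : ENNReal :=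
  if z = 1 then 2/3 else if z < 0 then (2 : ENNReal) ^ z / 3 else 0

/-- The first descending ladder time τ_{-1} = inf{ n ≥ 1 : S n < 0 } of a path S,
as an element of ℕ∞ (equal to ⊤ when the path never goes below 0). -/
noncomputable def tauMinusOne (S : ℕ → ℤ) : ℕ∞ :=
  sInf {t : ℕ∞ | ∃ n : ℕ, t = (n : ℕ∞) ∧ 1 ≤ n ∧ S n < 0}

/-!
Conditioning on the first step: with probability `1/3` the walk jumps below `0` at once, and with
probability `2/3` it moves up to `1` and then has to pass below `-1` relative to its start. Since
the negative jumps are geometric, the overshoot below `0` at the ladder time is geometric and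
independent of that time, so the first epoch below the current level lands exactly one unit lower
with probability `1/2`, in which case a fresh ladder epoch is needed. With `a n = P(τ = n)`,
computed as the weight of the step sequences whose first descent happens at time `n`, this gives
`3 a (n+1) = [n = 0] + a n + ∑_{i+j=n} a i a j`, that is `3 F = s + s F + s F²` for the
generating function `F`. At `s = 1` the only finite root is `1`, so `τ` is almost surely finite;
for `s < 1` the bound `F ≤ 1` selects the smaller root.
-/

open ProbabilityTheory Finset.HasAntidiagonal
open scoped ENNReal NNReal

theorem ENNReal.tsum_mul_tsum_eq_tsum_sum_antidiagonal {A : Type*} [AddCommMonoid A]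
    [Finset.HasAntidiagonal A] (f g : A → ℝ≥0∞) :
    (∑' n, f n) * ∑' n, g n = ∑' n, ∑ x ∈ antidiagonal n, f x.1 * g x.2 := by
  rw [← ENNReal.tsum_mul_right]
  simp_rw [← ENNReal.tsum_mul_left]
  rw [← ENNReal.tsum_prod, ← Finset.HasAntidiagonal.sigmaAntidiagonalEquivProd.tsum_eq,
    ENNReal.tsum_sigma']
  exact tsum_congr fun n => Finset.tsum_subtype (antidiagonal n) fun x => f x.1 * g x.2

namespace AnimalWalk

lemma tauMinusOne_eq_coe_iff (S : ℕ → ℤ) (n : ℕ) :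
    tauMinusOne S = n ↔ IsLeast {m | 1 ≤ m ∧ S m < 0} n := by
  have himage : {t : ℕ∞ | ∃ m : ℕ, t = m ∧ 1 ≤ m ∧ S m < 0} =
      (↑) '' {m | 1 ≤ m ∧ S m < 0} := by
    ext t; exact exists_congr fun m => by rw [eq_comm]; exact and_comm
  rw [tauMinusOne, himage]
  rcases Set.eq_empty_or_nonempty {m | 1 ≤ m ∧ S m < 0} with hempty | hne
  · simp [hempty, IsLeast]
  · rw [sInf_image, ← ENat.natCast_sInf hne, Nat.cast_inj]
    exact ⟨fun h => h ▸ ⟨Nat.sInf_mem hne, fun m hm => Nat.sInf_le hm⟩, IsLeast.csInf_eq⟩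

lemma tauMinusOne_eq_coe_iff_of_zero {S : ℕ → ℤ} (hS : S 0 = 0) (n : ℕ) :
    tauMinusOne S = n ↔ S n < 0 ∧ ∀ m < n, 0 ≤ S m := by
  rw [tauMinusOne_eq_coe_iff]
  constructor
  · rintro ⟨⟨-, hn⟩, hmin⟩
    exact ⟨hn, fun m hm => not_lt.mp fun hneg =>
      (hmin ⟨Nat.one_le_iff_ne_zero.mpr (by rintro rfl; omega), hneg⟩).not_gt hm⟩
  · rintro ⟨hn, hmin⟩
    refine ⟨⟨Nat.one_le_iff_ne_zero.mpr (by rintro rfl; omega), hn⟩, fun m ⟨_, hm⟩ =>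
      not_lt.mp fun hlt => (hmin m hlt).not_gt hm⟩

def firstPassage (c : ℤ) (n : ℕ) : Set (List ℤ) :=
  {l | l.length = n ∧ (∀ m < n, c ≤ (l.take m).sum) ∧ l.sum < c}

def firstPassageTo (n : ℕ) (z : ℤ) : Set (List ℤ) :=
  {l | l ∈ firstPassage 0 n ∧ l.sum = z}

def nonnegPaths (n : ℕ) : Set (List ℤ) :=
  {u | u.length = n ∧ ∀ m ≤ n, 0 ≤ (u.take m).sum}

@[simp] lemma firstPassage_zero_length (c : ℤ) (hc : c ≤ 0) : firstPassage c 0 = ∅ := by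
  refine Set.eq_empty_of_forall_notMem fun l ⟨hl, _, hsum⟩ => ?_
  simp [List.length_eq_zero_iff.mp hl] at hsum
  omega

lemma eq_of_take_mem_firstPassage {c : ℤ} {l : List ℤ} {m m' : ℕ}
    (h : l.take m ∈ firstPassage c m) (h' : l.take m' ∈ firstPassage c m') : m = m' := by
  wlog hlt : m < m' generalizing m m'
  · rcases (not_lt.mp hlt).lt_or_eq with hlt' | heq
    · exact (this h' h hlt').symm
    · exact heq.symm
  have := h'.2.1 m hlt
  rw [List.take_take, min_eq_left hlt.le] at this
  exact absurd h.2.2 (not_lt.mpr this)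

lemma sum_take_eq_add {M : Type*} [AddMonoid M] {l : List M} {m i : ℕ} (h : m ≤ i) :
    (l.take i).sum = (l.take m).sum + ((l.drop m).take (i - m)).sum := by
  rw [← List.sum_append, ← List.take_add, Nat.add_sub_cancel' h]

section PathMass

variable (p : ℤ → ℝ≥0∞)

noncomputable def pathWeight (l : List ℤ) : ℝ≥0∞ := (l.map p).prod

noncomputable def pathMass (s : Set (List ℤ)) : ℝ≥0∞ := ∑' l : s, pathWeight p l

@[simp] lemma pathWeight_nil : pathWeight p [] = 1 := rfl

@[simp] lemma pathWeight_cons (z : ℤ) (l : List ℤ) :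
    pathWeight p (z :: l) = p z * pathWeight p l := by
  simp [pathWeight]

lemma pathWeight_append (u v : List ℤ) :
    pathWeight p (u ++ v) = pathWeight p u * pathWeight p v := by
  simp [pathWeight]

@[simp] lemma pathMass_empty : pathMass p ∅ = 0 := by
  simp [pathMass]

@[simp] lemma pathMass_singleton (l : List ℤ) : pathMass p {l} = pathWeight p l :=
  tsum_singleton l _

lemma pathMass_congr_support {s t : Set (List ℤ)}
    (h : s ∩ Function.support (pathWeight p) = t ∩ Function.support (pathWeight p)) :
    pathMass p s = pathMass p t := by
  rw [pathMass, pathMass, tsum_subtype, tsum_subtype, ← Set.indicator_inter_support, h,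
    Set.indicator_inter_support]

lemma pathMass_union {s t : Set (List ℤ)} (h : Disjoint s t) :
    pathMass p (s ∪ t) = pathMass p s + pathMass p t :=
  ENNReal.summable.tsum_union_disjoint h ENNReal.summable

lemma pathMass_iUnion {s : ℕ → Set (List ℤ)} (h : Pairwise (Function.onFun Disjoint s)) :
    pathMass p (⋃ i, s i) = ∑' i, pathMass p (s i) :=
  ENNReal.tsum_biUnion fun _ _ _ _ hij => h hij

lemma pathMass_take_drop {m : ℕ} {A : Set (List ℤ)} (hA : ∀ u ∈ A, u.length = m)
    (B : List ℤ → Set (List ℤ)) :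
    pathMass p {l | l.take m ∈ A ∧ l.drop m ∈ B (l.take m)} =
      ∑' u : A, pathWeight p u * pathMass p (B u) := by
  simp_rw [pathMass, ← ENNReal.tsum_mul_left, ← pathWeight_append]
  rw [← ENNReal.tsum_sigma' (fun x : Σ u : A, B u => pathWeight p (x.1.1 ++ x.2.1))]
  let e (x : Σ u : A, B u) : {l : List ℤ | l.take m ∈ A ∧ l.drop m ∈ B (l.take m)} :=
    ⟨x.1.1 ++ x.2.1, by
      rw [Set.mem_ofPred_eq, List.take_left' (hA _ x.1.2), List.drop_left' (hA _ x.1.2)]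
      exact ⟨x.1.2, x.2.2⟩⟩
  have he : Function.Bijective e := by
    refine ⟨fun x y hxy => ?_, fun l => ?_⟩
    · have happ : x.1.1 ++ x.2.1 = y.1.1 ++ y.2.1 := congrArg Subtype.val hxy
      obtain ⟨h1, h2⟩ := List.append_inj happ ((hA _ x.1.2).trans (hA _ y.1.2).symm)
      exact Sigma.subtype_ext (Subtype.ext h1) h2
    · exact ⟨⟨⟨_, l.2.1⟩, ⟨_, l.2.2⟩⟩, Subtype.ext (List.take_append_drop m l.1)⟩
  exact ((Equiv.ofBijective e he).tsum_eq (fun l => pathWeight p l)).symm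

end PathMass

lemma animalStepLaw_one : animalStepLaw 1 = 2 / 3 := by simp [animalStepLaw]

lemma animalStepLaw_neg_one : animalStepLaw (-1) = 6⁻¹ := by
  rw [animalStepLaw, if_neg (by norm_num), if_pos (by norm_num), zpow_neg_one,
    ENNReal.div_eq_inv_mul, ← ENNReal.mul_inv (by norm_num) (by norm_num)]
  norm_num

lemma eq_one_or_neg_of_animalStepLaw_ne_zero {z : ℤ} (h : animalStepLaw z ≠ 0) :
    z = 1 ∨ z < 0 := by
  unfold animalStepLaw at h
  split_ifs at h with h1 h2
  exacts [.inl h1, .inr h2, absurd rfl h]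

lemma animalStepLaw_neg_sub (j : ℕ) {σ : ℤ} (hσ : 0 ≤ σ) :
    animalStepLaw (-1 - j - σ) = 2⁻¹ ^ j * animalStepLaw (-1 - σ) := by
  have hne : ∀ z : ℤ, z < 0 → animalStepLaw z = 2 ^ z / 3 := fun z hz => by
    rw [animalStepLaw, if_neg (by omega), if_pos hz]
  rw [hne _ (by omega), hne _ (by omega), show -1 - (j : ℤ) - σ = -j + (-1 - σ) by ring,
    ENNReal.zpow_add (by norm_num) (by norm_num), ENNReal.zpow_neg, zpow_natCast, ENNReal.inv_pow,
    mul_div_assoc]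

lemma firstPassageTo_succ_eq (n : ℕ) {z : ℤ} (hz : z < 0) :
    firstPassageTo (n + 1) z =
      {l | l.take n ∈ nonnegPaths n ∧
        l.drop n ∈ ({[z - (l.take n).sum]} : Set (List ℤ))} := by
  ext l
  constructor
  · rintro ⟨⟨hlen, hpre, -⟩, hsum⟩
    refine ⟨⟨by simp [hlen], fun m hm => ?_⟩, ?_⟩
    · rw [List.take_take, min_eq_left hm]
      exact hpre m (by omega)
    · obtain ⟨x, hx⟩ : ∃ x, l.drop n = [x] :=
        List.length_eq_one_iff.mp (by simp [hlen])
      rw [Set.mem_singleton_iff, hx, ← hsum, ← List.sum_take_add_sum_drop l n, hx]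
      simp
  · rintro ⟨⟨hlen, hpre⟩, hdrop⟩
    rw [Set.mem_singleton_iff] at hdrop
    have hl : l = l.take n ++ [z - (l.take n).sum] := by
      rw [← hdrop, List.take_append_drop]
    have hsum : l.sum = z := by rw [hl]; simp
    refine ⟨⟨by rw [hl]; simp [hlen], fun m hm => ?_, hsum ▸ hz⟩, hsum⟩
    have := hpre m (by omega)
    rwa [List.take_take, min_eq_left (by omega)] at this

lemma pathMass_firstPassageTo_succ (p : ℤ → ℝ≥0∞) (n : ℕ) {z : ℤ} (hz : z < 0) :
    pathMass p (firstPassageTo (n + 1) z) =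
      ∑' u : nonnegPaths n, pathWeight p u * p (z - (u : List ℤ).sum) := by
  rw [firstPassageTo_succ_eq n hz,
    pathMass_take_drop p (fun u hu => hu.1) fun u => {[z - u.sum]}]
  simp

lemma pathMass_firstPassageTo_neg_sub (n j : ℕ) :
    pathMass animalStepLaw (firstPassageTo n (-1 - j)) =
      2⁻¹ ^ j * pathMass animalStepLaw (firstPassageTo n (-1)) := by
  cases n with
  | zero => simp [firstPassageTo]
  | succ n =>
    rw [pathMass_firstPassageTo_succ _ _ (by omega), pathMass_firstPassageTo_succ _ _ (by omega),
      ← ENNReal.tsum_mul_left]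
    refine tsum_congr fun u => ?_
    have hu : 0 ≤ (u : List ℤ).sum := by
      simpa [List.take_of_length_le u.2.1.le] using u.2.2 n le_rfl
    rw [animalStepLaw_neg_sub j hu, mul_left_comm]

lemma firstPassage_sum_le_eq_iUnion (n k : ℕ) :
    {l | l ∈ firstPassage 0 n ∧ l.sum ≤ -1 - k} =
      ⋃ j : ℕ, firstPassageTo n (-1 - (k + j : ℕ)) := by
  ext l
  simp only [Set.mem_iUnion, firstPassageTo, Set.mem_ofPred_eq]
  constructor
  · rintro ⟨hl, hsum⟩
    exact ⟨(-1 - k - l.sum).toNat, hl, by omega⟩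
  · rintro ⟨j, hl, hsum⟩
    exact ⟨hl, by omega⟩

lemma pathMass_firstPassage_sum_le_eq_tsum (n k : ℕ) :
    pathMass animalStepLaw {l | l ∈ firstPassage 0 n ∧ l.sum ≤ -1 - k} =
      ∑' j : ℕ, 2⁻¹ ^ (k + j) * pathMass animalStepLaw (firstPassageTo n (-1)) := by
  rw [firstPassage_sum_le_eq_iUnion, pathMass_iUnion]
  · exact tsum_congr fun j => pathMass_firstPassageTo_neg_sub n (k + j)
  · exact fun i j hij => Set.disjoint_left.mpr fun l hi hj =>
      hij (by have := hi.2.symm.trans hj.2; omega)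

lemma firstPassage_eq_sum_le (n : ℕ) :
    firstPassage 0 n = {l | l ∈ firstPassage 0 n ∧ l.sum ≤ -1 - (0 : ℕ)} := by
  ext l
  exact ⟨fun hl => ⟨hl, by have := hl.2.2; omega⟩, And.left⟩

lemma pathMass_firstPassage_sum_le (n k : ℕ) :
    pathMass animalStepLaw {l | l ∈ firstPassage 0 n ∧ l.sum ≤ -1 - k} =
      2⁻¹ ^ k * pathMass animalStepLaw (firstPassage 0 n) := by
  rw [pathMass_firstPassage_sum_le_eq_tsum, firstPassage_eq_sum_le,
    pathMass_firstPassage_sum_le_eq_tsum, ← ENNReal.tsum_mul_left]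
  simp_rw [zero_add, pow_add, mul_assoc]

lemma pathMass_firstPassageTo_neg_one (n : ℕ) :
    pathMass animalStepLaw (firstPassageTo n (-1)) =
      2⁻¹ * pathMass animalStepLaw (firstPassage 0 n) := by
  rw [firstPassage_eq_sum_le, pathMass_firstPassage_sum_le_eq_tsum]
  simp_rw [zero_add]
  rw [ENNReal.tsum_mul_right, ENNReal.tsum_geometric, ENNReal.one_sub_inv_two, inv_inv,
    ← mul_assoc, ENNReal.inv_mul_cancel (by norm_num) (by norm_num), one_mul]

lemma firstPassage_succ_inter_support {n : ℕ} (hn : 1 ≤ n) :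
    firstPassage 0 (n + 1) ∩ Function.support (pathWeight animalStepLaw) =
      {l | l.take 1 ∈ ({[1]} : Set (List ℤ)) ∧ l.drop 1 ∈ firstPassage (-1) n} ∩
        Function.support (pathWeight animalStepLaw) := by
  ext l
  refine and_congr_left fun hl => ?_
  rcases l with _ | ⟨z, t⟩
  · simp [firstPassage]
  · have hz := eq_one_or_neg_of_animalStepLaw_ne_zero
      (left_ne_zero_of_mul (by simpa using hl))
    simp only [firstPassage, Set.mem_ofPred_eq, List.take_succ_cons, List.take_zero,
      List.drop_succ_cons, List.drop_zero, Set.mem_singleton_iff, List.cons.injEq, and_true,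
      List.length_cons, Nat.forall_lt_succ_left, List.sum_cons, List.sum_nil]
    rcases hz with rfl | hz
    · constructor
      · rintro ⟨hlen, ⟨-, hpre⟩, hsum⟩
        exact ⟨rfl, by omega, fun m hm => by have := hpre m hm; omega, by omega⟩
      · rintro ⟨-, hlen, hpre, hsum⟩
        exact ⟨by omega, ⟨le_rfl, fun m hm => by have := hpre m hm; omega⟩, by omega⟩
    · refine iff_of_false (fun ⟨_, ⟨_, hpre⟩, _⟩ => ?_) fun ⟨h1, _⟩ => by omega
      have := hpre 0 hn
      simp at this
      omega

lemma pathMass_firstPassage_succ {n : ℕ} (hn : 1 ≤ n) :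
    pathMass animalStepLaw (firstPassage 0 (n + 1)) =
      2 / 3 * pathMass animalStepLaw (firstPassage (-1) n) := by
  rw [pathMass_congr_support _ (firstPassage_succ_inter_support hn),
    pathMass_take_drop _ (fun u hu => by rw [hu]; rfl) fun _ => firstPassage (-1) n,
    tsum_singleton [1] fun u => pathWeight animalStepLaw u * _]
  simp [animalStepLaw_one]

lemma mem_firstPassage_neg_one_of_take_drop {l : List ℤ} {m n : ℕ}
    (hu : l.take m ∈ firstPassageTo m (-1)) (hv : l.drop m ∈ firstPassage 0 (n - m)) :
    l ∈ firstPassage (-1) n := by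
  obtain ⟨⟨hulen, hupre, -⟩, husum⟩ := hu
  have hmn : m < n := Nat.lt_of_sub_pos (Nat.pos_of_ne_zero fun h => by simp [h] at hv)
  refine ⟨?_, fun i hi => ?_, ?_⟩
  · rw [← List.take_append_drop m l, List.length_append, hulen, hv.1]
    omega
  · rcases lt_trichotomy i m with him | rfl | hmi
    · have := hupre i him
      rw [List.take_take, min_eq_left him.le] at this
      omega
    · omega
    · rw [sum_take_eq_add hmi.le, husum]
      have := hv.2.1 (i - m) (by omega)
      omega
  · rw [← List.sum_take_add_sum_drop l m, husum]
    have := hv.2.2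
    omega

lemma exists_take_drop_of_mem_firstPassage_neg_one {l : List ℤ} {n : ℕ}
    (hl : l ∈ firstPassage (-1) n) (h : ∃ m < n, (l.take m).sum < 0) :
    ∃ m, l.take m ∈ firstPassageTo m (-1) ∧ l.drop m ∈ firstPassage 0 (n - m) := by
  classical
  obtain ⟨hlen, hpre, hsum⟩ := hl
  obtain ⟨hmn, hneg⟩ := Nat.find_spec h
  set m := Nat.find h
  have hmin : ∀ i < m, 0 ≤ (l.take i).sum := fun i hi =>
    not_lt.mp fun hlt => Nat.find_min h hi ⟨hi.trans hmn, hlt⟩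
  have hsum_m : (l.take m).sum = -1 := le_antisymm (by omega) (hpre m hmn)
  refine ⟨m, ⟨⟨by simp [hlen, hmn.le], fun i hi => ?_, hneg⟩, hsum_m⟩,
    by simp [hlen], fun i hi => ?_, ?_⟩
  · rw [List.take_take, min_eq_left hi.le]
    exact hmin i hi
  · have := hpre (m + i) (by omega)
    rw [sum_take_eq_add (Nat.le_add_right m i), hsum_m, Nat.add_sub_cancel_left] at this
    omega
  · rw [← List.sum_take_add_sum_drop l m, hsum_m] at hsum
    omega

lemma firstPassage_neg_one_eq (n : ℕ) :
    firstPassage (-1) n = {l | l ∈ firstPassage 0 n ∧ l.sum < -1} ∪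
      ⋃ m, {l | l.take m ∈ firstPassageTo m (-1) ∧ l.drop m ∈ firstPassage 0 (n - m)} := by
  ext l
  simp only [Set.mem_union, Set.mem_iUnion, Set.mem_ofPred_eq]
  constructor
  · intro hl
    by_cases hnonneg : ∀ m < n, 0 ≤ (l.take m).sum
    · exact .inl ⟨⟨hl.1, hnonneg, by have := hl.2.2; omega⟩, hl.2.2⟩
    · push Not at hnonneg
      exact .inr (exists_take_drop_of_mem_firstPassage_neg_one hl hnonneg)
  · rintro (⟨⟨hlen, hpre, -⟩, hsum⟩ | ⟨m, hu, hv⟩)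
    · exact ⟨hlen, fun i hi => by have := hpre i hi; omega, hsum⟩
    · exact mem_firstPassage_neg_one_of_take_drop hu hv

lemma pathMass_firstPassage_neg_one (p : ℤ → ℝ≥0∞) (n : ℕ) :
    pathMass p (firstPassage (-1) n) = pathMass p {l | l ∈ firstPassage 0 n ∧ l.sum < -1} +
      ∑' m, pathMass p (firstPassageTo m (-1)) * pathMass p (firstPassage 0 (n - m)) := by
  rw [firstPassage_neg_one_eq, pathMass_union, pathMass_iUnion]
  · congr 1
    refine tsum_congr fun m => ?_
    rw [pathMass_take_drop p (fun u hu => hu.1.1) fun _ => firstPassage 0 (n - m),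
      ENNReal.tsum_mul_right]
    rfl
  · exact fun i j hij => Set.disjoint_left.mpr fun l hi hj =>
      hij (eq_of_take_mem_firstPassage hi.1.1 hj.1.1)
  · refine Set.disjoint_left.mpr fun l ⟨hl, _⟩ hpiece => ?_
    obtain ⟨m, hu, hv⟩ := Set.mem_iUnion.mp hpiece
    have hl' : l.take n ∈ firstPassage 0 n := by rwa [List.take_of_length_le hl.1.le]
    obtain rfl := eq_of_take_mem_firstPassage hu.1 hl'
    simp at hv

noncomputable def ladderMass (n : ℕ) : ℝ≥0∞ := pathMass animalStepLaw (firstPassage 0 n)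

lemma ladderMass_zero : ladderMass 0 = 0 := by simp [ladderMass]

lemma ladderMass_one : 3 * ladderMass 1 = 1 := by
  have hD : pathMass animalStepLaw (firstPassageTo 1 (-1)) = 6⁻¹ := by
    have h0 : nonnegPaths 0 = {[]} := by
      ext u
      simp [nonnegPaths, List.length_eq_zero_iff]
    rw [pathMass_firstPassageTo_succ _ 0 (by norm_num), h0,
      tsum_singleton ([] : List ℤ) fun u =>
        pathWeight animalStepLaw u * animalStepLaw (-1 - u.sum)]
    simp [animalStepLaw_neg_one]
  rw [pathMass_firstPassageTo_neg_one] at hD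
  calc 3 * ladderMass 1 = 3 * 2 * (2⁻¹ * ladderMass 1) := by
        rw [mul_assoc, ← mul_assoc 2, ENNReal.mul_inv_cancel (by norm_num) (by norm_num),
          one_mul]
    _ = 1 := by
        rw [ladderMass, hD, show (3 : ℝ≥0∞) * 2 = 6 by norm_num,
          ENNReal.mul_inv_cancel (by norm_num) (by norm_num)]

lemma tsum_mul_sub_eq_sum_antidiagonal {a : ℕ → ℝ≥0∞} (h0 : a 0 = 0) (n : ℕ) :
    ∑' m, a m * a (n - m) = ∑ x ∈ antidiagonal n, a x.1 * a x.2 := by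
  rw [Finset.Nat.sum_antidiagonal_eq_sum_range_succ_mk]
  refine tsum_eq_sum fun m hm => ?_
  rw [Finset.mem_range, not_lt] at hm
  rw [Nat.sub_eq_zero_of_le (by omega), h0, mul_zero]

lemma ladderMass_succ (n : ℕ) :
    3 * ladderMass (n + 1) = (if n = 0 then 1 else 0) + ladderMass n +
      ∑ x ∈ antidiagonal n, ladderMass x.1 * ladderMass x.2 := by
  rcases Nat.eq_zero_or_pos n with rfl | hn
  · simp [ladderMass_one, ladderMass_zero]
  have hdeep : {l | l ∈ firstPassage 0 n ∧ l.sum < -1} =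
      {l | l ∈ firstPassage 0 n ∧ l.sum ≤ -1 - (1 : ℕ)} := by
    ext l
    exact and_congr_right fun _ => by omega
  have h2 : (2 : ℝ≥0∞) * 2⁻¹ = 1 := ENNReal.mul_inv_cancel (by norm_num) (by norm_num)
  rw [if_neg hn.ne', zero_add, ← tsum_mul_sub_eq_sum_antidiagonal ladderMass_zero]
  calc 3 * ladderMass (n + 1) = 2 * pathMass animalStepLaw (firstPassage (-1) n) := by
        rw [ladderMass, pathMass_firstPassage_succ hn, ← mul_assoc,
          ENNReal.mul_div_cancel (by norm_num) (by norm_num)]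
    _ = 2 * (2⁻¹ * ladderMass n + ∑' m, 2⁻¹ * ladderMass m * ladderMass (n - m)) := by
        rw [pathMass_firstPassage_neg_one, hdeep, pathMass_firstPassage_sum_le, pow_one]
        simp_rw [pathMass_firstPassageTo_neg_one]
        rfl
    _ = ladderMass n + ∑' m, ladderMass m * ladderMass (n - m) := by
        simp_rw [mul_add, ← ENNReal.tsum_mul_left, ← mul_assoc, h2, one_mul]

lemma eq_smaller_root_of_le_one {s F : ℝ} (hs0 : 0 < s) (hs1 : s < 1) (hF : F ≤ 1)
    (h : 3 * F = s + s * F + s * F ^ 2) :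
    F = (3 - s - √(3 * (1 - s) * (s + 3))) / (2 * s) := by
  have hsq : (3 - s - 2 * s * F) ^ 2 = 3 * (1 - s) * (s + 3) := by linear_combination (-4 * s) * h
  have hpos : 0 ≤ 3 - s - 2 * s * F := by nlinarith [mul_nonneg hs0.le (sub_nonneg.mpr hF)]
  rw [← hsq, Real.sqrt_sq hpos]
  field_simp
  ring

section GeneratingFunction

variable {a : ℕ → ℝ≥0∞}

lemma three_mul_tsum_pow_mul (h0 : a 0 = 0)
    (hrec : ∀ n, 3 * a (n + 1) =
      (if n = 0 then 1 else 0) + a n + ∑ x ∈ antidiagonal n, a x.1 * a x.2)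
    (σ : ℝ≥0∞) :
    3 * ∑' n, σ ^ n * a n =
      σ + σ * ∑' n, σ ^ n * a n + σ * (∑' n, σ ^ n * a n) ^ 2 := by
  set G := ∑' n, σ ^ n * a n with hG
  have hsq : G ^ 2 = ∑' n, σ ^ n * ∑ x ∈ antidiagonal n, a x.1 * a x.2 := by
    rw [sq, ENNReal.tsum_mul_tsum_eq_tsum_sum_antidiagonal]
    refine tsum_congr fun n => ?_
    rw [Finset.mul_sum]
    refine Finset.sum_congr rfl fun x hx => ?_
    rw [← mem_antidiagonal.mp hx, pow_add]
    ring
  have hshift : 3 * G = ∑' n, σ ^ (n + 1) * (3 * a (n + 1)) := by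
    rw [hG, tsum_eq_zero_add' ENNReal.summable, h0, mul_zero, zero_add, ← ENNReal.tsum_mul_left]
    exact tsum_congr fun n => by ring
  rw [hshift, hsq]
  simp_rw [hrec, mul_add, ENNReal.tsum_add, pow_succ', mul_assoc, ENNReal.tsum_mul_left]
  rw [tsum_eq_single 0 fun n hn => by simp [hn]]
  simp [hG]

lemma tsum_eq_one_of_three_mul (h0 : a 0 = 0)
    (hrec : ∀ n, 3 * a (n + 1) =
      (if n = 0 then 1 else 0) + a n + ∑ x ∈ antidiagonal n, a x.1 * a x.2)
    (hle : ∑' n, a n ≤ 1) :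
    ∑' n, a n = 1 := by
  have h := three_mul_tsum_pow_mul h0 hrec 1
  simp only [one_pow, one_mul] at h
  obtain ⟨G, hG⟩ : ∃ G : ℝ≥0, ∑' n, a n = G :=
    ⟨_, (ENNReal.coe_toNNReal (ne_top_of_le_ne_top ENNReal.one_ne_top hle)).symm⟩
  rw [hG] at h ⊢
  have hR : (3 : ℝ) * G = 1 + G + G ^ 2 := by exact_mod_cast h
  have hG1 : (G : ℝ) = 1 := by nlinarith [sq_nonneg ((G : ℝ) - 1)]
  exact_mod_cast hG1

lemma tsum_pow_mul_toReal_eq (h0 : a 0 = 0)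
    (hrec : ∀ n, 3 * a (n + 1) =
      (if n = 0 then 1 else 0) + a n + ∑ x ∈ antidiagonal n, a x.1 * a x.2)
    (hle : ∑' n, a n ≤ 1) {s : ℝ} (hs0 : 0 < s) (hs1 : s < 1) :
    ∑' n, s ^ n * (a n).toReal = (3 - s - √(3 * (1 - s) * (s + 3))) / (2 * s) := by
  have hσ : ENNReal.ofReal s ≤ 1 := ENNReal.ofReal_le_one.mpr hs1.le
  have hGle : ∑' n, ENNReal.ofReal s ^ n * a n ≤ 1 :=
    (ENNReal.tsum_le_tsum fun n => mul_le_of_le_one_left' (pow_le_one₀ zero_le hσ)).trans hle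
  have hconv : ∑' n, s ^ n * (a n).toReal = (∑' n, ENNReal.ofReal s ^ n * a n).toReal := by
    rw [ENNReal.tsum_toReal_eq fun n => ENNReal.mul_ne_top (ENNReal.pow_ne_top
      ENNReal.ofReal_ne_top) (ne_top_of_le_ne_top ENNReal.one_ne_top
        ((ENNReal.le_tsum n).trans hle))]
    simp [ENNReal.toReal_ofReal hs0.le]
  have h := three_mul_tsum_pow_mul h0 hrec (ENNReal.ofReal s)
  obtain ⟨G, hG⟩ : ∃ G : ℝ≥0, ∑' n, ENNReal.ofReal s ^ n * a n = G :=
    ⟨_, (ENNReal.coe_toNNReal (ne_top_of_le_ne_top ENNReal.one_ne_top hGle)).symm⟩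
  rw [hG] at h hGle
  rw [hconv, hG, ENNReal.coe_toReal]
  refine eq_smaller_root_of_le_one hs0 hs1 (by exact_mod_cast hGle) ?_
  have hR : (3 : ℝ≥0) * G = s.toNNReal + s.toNNReal * G + s.toNNReal * G ^ 2 := by
    refine ENNReal.coe_injective ?_
    push_cast
    exact h
  have := congrArg NNReal.toReal hR
  push_cast [Real.coe_toNNReal _ hs0.le] at this
  exact this

end GeneratingFunction

lemma measure_eq_top_add_tsum_measure_eq_coe {Ω : Type*} [MeasurableSpace Ω] (P : Measure Ω)
    [IsProbabilityMeasure P] (T : Ω → ℕ∞) (hT : ∀ n : ℕ, MeasurableSet {ω | T ω = n}) :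
    P {ω | T ω = ⊤} + ∑' n : ℕ, P {ω | T ω = n} = 1 := by
  have htop : {ω | T ω = ⊤} = (⋃ n : ℕ, {ω | T ω = n})ᶜ := by
    ext ω
    simp only [Set.mem_ofPred_eq, Set.mem_compl_iff, Set.mem_iUnion]
    rw [← not_iff_not, not_not, ← ne_eq, ENat.ne_top_iff_exists]
    simp [eq_comm]
  have hdisj : Pairwise (Function.onFun Disjoint fun n : ℕ => {ω | T ω = n}) :=
    fun i j hij => Set.disjoint_left.mpr fun ω hi hj => hij (by exact_mod_cast hi.symm.trans hj)
  rw [htop, prob_compl_eq_one_sub (.iUnion hT), ← measure_iUnion hdisj hT]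
  exact tsub_add_cancel_of_le prob_le_one

section Walk

variable {Ω : Type*} (ξ : ℕ → Ω → ℤ)

def stepList (n : ℕ) (ω : Ω) : List ℤ := (List.range n).map (ξ · ω)

lemma sum_take_stepList {m n : ℕ} (h : m ≤ n) (ω : Ω) :
    ((stepList ξ n ω).take m).sum = walk ξ m ω := by
  rw [stepList, ← List.map_take, List.take_range, min_eq_left h, walk,
    Finset.sum_eq_multiset_sum]
  rfl

lemma tauMinusOne_walk_eq_coe_iff (n : ℕ) (ω : Ω) :
    tauMinusOne (fun i => walk ξ i ω) = n ↔ stepList ξ n ω ∈ firstPassage 0 n := by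
  have hlen : (stepList ξ n ω).length = n := by simp [stepList]
  have hsum : (stepList ξ n ω).sum = walk ξ n ω := by
    rw [← sum_take_stepList ξ le_rfl, List.take_of_length_le hlen.le]
  rw [tauMinusOne_eq_coe_iff_of_zero (by simp [walk])]
  simp only [firstPassage, Set.mem_ofPred_eq, hlen, hsum, true_and]
  exact and_comm.trans (and_congr_left' (forall₂_congr fun m hm => by
    rw [sum_take_stepList ξ hm.le]))

lemma stepList_preimage_singleton {n : ℕ} {l : List ℤ} (hl : l.length = n) :
    stepList ξ n ⁻¹' {l} = ⋂ i ∈ Finset.range n, ξ i ⁻¹' {l.getD i 0} := by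
  subst hl
  ext ω
  simp +contextual [stepList, List.ext_getElem_iff]

variable {ξ}

lemma measurableSet_stepList_preimage_singleton [MeasurableSpace Ω]
    (hmeas : ∀ i, Measurable (ξ i)) (n : ℕ) (l : List ℤ) :
    MeasurableSet (stepList ξ n ⁻¹' {l}) := by
  by_cases hl : l.length = n
  · rw [stepList_preimage_singleton ξ hl]
    exact Finset.measurableSet_biInter _ fun i _ => hmeas i (measurableSet_singleton _)
  · convert MeasurableSet.empty
    exact Set.eq_empty_of_forall_notMem fun ω hω =>
      hl (by simp [← Set.mem_singleton_iff.mp hω, stepList])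

lemma measurableSet_stepList_preimage [MeasurableSpace Ω] (hmeas : ∀ i, Measurable (ξ i))
    (n : ℕ) (s : Set (List ℤ)) : MeasurableSet (stepList ξ n ⁻¹' s) := by
  rw [← Set.biUnion_preimage_singleton]
  exact .biUnion s.to_countable fun l _ => measurableSet_stepList_preimage_singleton hmeas n l

lemma measure_stepList_preimage [MeasurableSpace Ω] (P : Measure Ω) {p : ℤ → ℝ≥0∞}
    (hmeas : ∀ i, Measurable (ξ i)) (hindep : iIndepFun ξ P)
    (hlaw : ∀ i z, P {ω | ξ i ω = z} = p z) {n : ℕ} {s : Set (List ℤ)}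
    (hs : ∀ l ∈ s, l.length = n) :
    P (stepList ξ n ⁻¹' s) = pathMass p s := by
  rw [← tsum_measure_preimage_singleton s.to_countable fun l _ =>
    measurableSet_stepList_preimage_singleton hmeas n l]
  refine tsum_congr fun l => ?_
  rw [stepList_preimage_singleton ξ (hs l l.2),
    hindep.measure_inter_preimage_eq_mul _ fun i _ => measurableSet_singleton _]
  simp_rw [Set.preimage, Set.mem_singleton_iff, hlaw]
  rw [pathWeight, ← hs l l.2, Finset.prod_range, ← Fin.prod_univ_fun_getElem]
  simp

end Walk

end AnimalWalk

open AnimalWalk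

theorem ladder_time_generating_function
    {Ω : Type*} [MeasurableSpace Ω] (P : Measure Ω) [IsProbabilityMeasure P]
    (ξ : ℕ → Ω → ℤ) (hmeas : ∀ i, Measurable (ξ i))
    (hindep : ProbabilityTheory.iIndepFun ξ P)
    (hlaw : ∀ i, ∀ z : ℤ, P {ω | ξ i ω = z} = animalStepLaw z)
    (s : ℝ) (hs0 : 0 < s) (hs1 : s < 1) :
    P {ω | tauMinusOne (fun i => walk ξ i ω) = ⊤} = 0 ∧
    ∑' n : ℕ, s ^ n * (P {ω | tauMinusOne (fun i => walk ξ i ω) = (n : ℕ∞)}).toReal =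
      (3 - s - Real.sqrt (3 * (1 - s) * (s + 3))) / (2 * s) := by
  have hevent (n : ℕ) : {ω | tauMinusOne (fun i => walk ξ i ω) = n} =
      stepList ξ n ⁻¹' firstPassage 0 n :=
    Set.ext fun ω => tauMinusOne_walk_eq_coe_iff ξ n ω
  have hmass (n : ℕ) : P {ω | tauMinusOne (fun i => walk ξ i ω) = n} = ladderMass n := by
    rw [hevent]
    exact measure_stepList_preimage P hmeas hindep hlaw fun l hl => hl.1
  have htotal := measure_eq_top_add_tsum_measure_eq_coe P
    (fun ω => tauMinusOne fun i => walk ξ i ω)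
    fun n => hevent n ▸ measurableSet_stepList_preimage hmeas n _
  simp only [hmass] at htotal
  have hsum : ∑' n, ladderMass n = 1 :=
    tsum_eq_one_of_three_mul ladderMass_zero ladderMass_succ (htotal ▸ le_add_self)
  refine ⟨?_, ?_⟩
  · rw [hsum] at htotal
    exact (ENNReal.add_left_inj ENNReal.one_ne_top).mp (htotal.trans (zero_add 1).symm)
  · simp only [hmass]
    exact tsum_pow_mul_toReal_eq ladderMass_zero ladderMass_succ hsum.le hs0 hs1
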